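/- Let (X, φ) be an algebraic convex geometry and C a maximal chain in its lattice of closed sets. Define x ≤_C y iff h_C(x) ⊆ h_C(y), where h_C(x) = ⋂{C' ∈ C : x ∈ C'}. Then ≤_C is a total order on X and the family of down-sets of (X, ≤_C) equals C. -/

import Mathlib

/-- φ is a closure operator: extensive, monotone, idempotent. -/
def IsClosureOp {X : Type*} (φ : Set X → Set X) : Prop :=
  (∀ A, A ⊆ φ A) ∧ (∀ A B, A ⊆ B → φ A ⊆ φ B) ∧ (∀ A, φ (φ A) = φ A)

/-- φ is algebraic (finitary): the closure of a set is the union of closures of its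
finite subsets. -/
def IsAlgebraicOp {X : Type*} (φ : Set X → Set X) : Prop :=
  ∀ A, φ A = ⋃₀ {T | ∃ B, B ⊆ A ∧ B.Finite ∧ T = φ B}

/-- The anti-exchange property. -/
def AntiExchange {X : Type*} (φ : Set X → Set X) : Prop :=
  ∀ (x y : X) (A : Set X), x ≠ y → φ A = A → x ∉ A →
    x ∈ φ (A ∪ {y}) → y ∉ φ (A ∪ {x})

/-- A convex geometry: a zero-closure operator with the anti-exchange property. -/
def IsConvexGeometry {X : Type*} (φ : Set X → Set X) : Prop :=
  IsClosureOp φ ∧ φ ∅ = ∅ ∧ AntiExchange φ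

/-- An algebraic convex geometry. -/
def IsAlgConvexGeometry {X : Type*} (φ : Set X → Set X) : Prop :=
  IsClosureOp φ ∧ IsAlgebraicOp φ ∧ φ ∅ = ∅ ∧ AntiExchange φ

/-- An algebraic subset of Pow X : closed under arbitrary intersections
(with ⋂₀ ∅ = X) and under unions of nonempty up-directed subfamilies. -/
def IsAlgSubset {X : Type*} (F : Set (Set X)) : Prop :=
  (∀ S ⊆ F, ⋂₀ S ∈ F) ∧
  (∀ S ⊆ F, S.Nonempty → (∀ A ∈ S, ∀ B ∈ S, ∃ C ∈ S, A ∪ B ⊆ C) → ⋃₀ S ∈ F)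

/-- A maximal chain in the lattice of φ-closed sets. -/
def IsMaxChainOfClosed {X : Type*} (φ : Set X → Set X) (C : Set (Set X)) : Prop :=
  C ⊆ {Y | φ Y = Y} ∧ IsChain (· ⊆ ·) C ∧
  ∀ T, φ T = T → (∀ A ∈ C, T ⊆ A ∨ A ⊆ T) → T ∈ C

/-!
Every point `x` has a hull `h_C(x)`, the least member of `C` containing `x`, and the union
`g_C(x)` of the members of `C` missing `x` is again in `C` (unions of chains of closed sets are
closed by algebraicity, and by maximality of `C`). If some `z ≠ x` lay in `h_C(x) \ g_C(x)`, then
by maximality the closure of `g_C(x) ∪ {z}` would be a member of `C` containing `x`, so `x` and `z`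
would each lie in the closure of `g_C(x)` with the other adjoined, against anti-exchange. Hence
`h_C(x) = g_C(x) ∪ {x}`, which makes `h_C` injective, so `≤_C` is antisymmetric; totality comes
from `C` being a chain. A down-set of `≤_C` is the union of the hulls of its points, hence in `C`.
-/

section

variable {X : Type*} {φ : Set X → Set X} {C S : Set (Set X)} {A : Set X} {x z : X}

theorem IsClosureOp.monotone (hcl : IsClosureOp φ) : Monotone φ := fun A B => hcl.2.1 A B

theorem IsChain.sInter_comparable (hC : IsChain (· ⊆ ·) C) (hS : S ⊆ C) (hA : A ∈ C) :
    ⋂₀ S ⊆ A ∨ A ⊆ ⋂₀ S := by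
  by_cases h : ∀ s ∈ S, A ⊆ s
  · exact Or.inr (Set.subset_sInter h)
  push Not at h
  obtain ⟨s, hs, hAs⟩ := h
  exact Or.inl ((Set.sInter_subset_of_mem hs).trans
    ((hC.total (hS hs) hA).resolve_right hAs))

theorem IsChain.sUnion_comparable (hC : IsChain (· ⊆ ·) C) (hS : S ⊆ C) (hA : A ∈ C) :
    ⋃₀ S ⊆ A ∨ A ⊆ ⋃₀ S := by
  by_cases h : ∀ s ∈ S, s ⊆ A
  · exact Or.inl (Set.sUnion_subset h)
  push Not at h
  obtain ⟨s, hs, hsA⟩ := h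
  exact Or.inr (((hC.total (hS hs) hA).resolve_left hsA).trans (Set.subset_sUnion_of_mem hs))

theorem closure_sInter_of_closed (hext : ∀ A, A ⊆ φ A) (hmono : Monotone φ)
    (hS : ∀ s ∈ S, φ s = s) : φ (⋂₀ S) = ⋂₀ S :=
  (Set.subset_sInter fun s hs => hS s hs ▸ hmono (Set.sInter_subset_of_mem hs)).antisymm
    (hext _)

theorem closure_sUnion_of_directedOn (hext : ∀ A, A ⊆ φ A) (hmono : Monotone φ)
    (halg : IsAlgebraicOp φ) (hne : S.Nonempty) (hdir : DirectedOn (· ⊆ ·) S)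
    (hS : ∀ s ∈ S, φ s = s) : φ (⋃₀ S) = ⋃₀ S := by
  refine subset_antisymm ?_ (hext _)
  intro y hy
  rw [halg] at hy
  obtain ⟨_, ⟨B, hBS, hBfin, rfl⟩, hyB⟩ := hy
  obtain ⟨s, hs, hBs⟩ := hdir.exists_mem_subset_of_finite_of_subset_sUnion hne hBfin hBS
  exact ⟨s, hs, hS s hs ▸ hmono hBs hyB⟩

namespace IsMaxChainOfClosed

variable (hC : IsMaxChainOfClosed φ C)
include hC

theorem sInter_mem (hext : ∀ A, A ⊆ φ A) (hmono : Monotone φ) (hS : S ⊆ C) : ⋂₀ S ∈ C :=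
  hC.2.2 _ (closure_sInter_of_closed hext hmono fun _ hs => hC.1 (hS hs))
    fun _ hA => hC.2.1.sInter_comparable hS hA

theorem sUnion_mem (hext : ∀ A, A ⊆ φ A) (hmono : Monotone φ) (halg : IsAlgebraicOp φ)
    (hempty : φ ∅ = ∅) (hS : S ⊆ C) : ⋃₀ S ∈ C := by
  rcases S.eq_empty_or_nonempty with rfl | hne
  · simpa using hC.2.2 ∅ hempty fun A _ => Or.inl (Set.empty_subset A)
  exact hC.2.2 _ (closure_sUnion_of_directedOn hext hmono halg hne
    (hC.2.1.mono hS).directedOn fun _ hs => hC.1 (hS hs))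
    fun _ hA => hC.2.1.sUnion_comparable hS hA

end IsMaxChainOfClosed

/-- The paper's `h_C(x)`. -/
def chainHull (C : Set (Set X)) (x : X) : Set X := ⋂₀ {A | A ∈ C ∧ x ∈ A}

/-- The lower cover of `chainHull C x` in a maximal chain `C`, i.e. `h_C(x) \ {x}`. -/
def chainBelow (C : Set (Set X)) (x : X) : Set X := ⋃₀ {A | A ∈ C ∧ x ∉ A}

theorem mem_chainHull : x ∈ chainHull C x := fun _ hA => hA.2

theorem chainHull_subset (hA : A ∈ C) (hx : x ∈ A) : chainHull C x ⊆ A :=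
  Set.sInter_subset_of_mem ⟨hA, hx⟩

theorem notMem_chainBelow : x ∉ chainBelow C x := fun ⟨_, hA, hxA⟩ => hA.2 hxA

theorem subset_chainBelow (hA : A ∈ C) (hx : x ∉ A) : A ⊆ chainBelow C x :=
  Set.subset_sUnion_of_mem ⟨hA, hx⟩

theorem IsChain.chainBelow_subset (hC : IsChain (· ⊆ ·) C) (hA : A ∈ C) (hx : x ∈ A) :
    chainBelow C x ⊆ A :=
  Set.sUnion_subset fun _ hB => (hC.total hB.1 hA).resolve_right fun hAB => hB.2 (hAB hx)

theorem IsChain.chainBelow_subset_chainHull (hC : IsChain (· ⊆ ·) C) :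
    chainBelow C x ⊆ chainHull C x :=
  Set.subset_sInter fun _ hA => hC.chainBelow_subset hA.1 hA.2

namespace IsMaxChainOfClosed

variable (hC : IsMaxChainOfClosed φ C)
include hC

theorem chainHull_mem (hext : ∀ A, A ⊆ φ A) (hmono : Monotone φ) : chainHull C x ∈ C :=
  hC.sInter_mem hext hmono fun _ hA => hA.1

theorem chainBelow_mem (hext : ∀ A, A ⊆ φ A) (hmono : Monotone φ) (halg : IsAlgebraicOp φ)
    (hempty : φ ∅ = ∅) : chainBelow C x ∈ C :=
  hC.sUnion_mem hext hmono halg hempty fun _ hA => hA.1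

theorem closure_insert_chainBelow_mem (hext : ∀ A, A ⊆ φ A) (hmono : Monotone φ)
    (hidem : ∀ A, φ (φ A) = φ A) (hz : z ∈ chainHull C x) :
    φ (insert z (chainBelow C x)) ∈ C := by
  refine hC.2.2 _ (hidem _) fun A hA => ?_
  by_cases hxA : x ∈ A
  · have hsub : insert z (chainBelow C x) ⊆ A :=
      Set.insert_subset (chainHull_subset hA hxA hz) (hC.2.1.chainBelow_subset hA hxA)
    exact Or.inl (hC.1 hA ▸ hmono hsub)
  · exact Or.inr ((subset_chainBelow hA hxA).trans ((Set.subset_insert _ _).trans (hext _)))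

theorem mem_closure_insert_chainBelow (hext : ∀ A, A ⊆ φ A) (hmono : Monotone φ)
    (hidem : ∀ A, φ (φ A) = φ A) (hz : z ∈ chainHull C x) (hzb : z ∉ chainBelow C x) :
    x ∈ φ (insert z (chainBelow C x)) := by
  by_contra hx
  exact hzb (subset_chainBelow (hC.closure_insert_chainBelow_mem hext hmono hidem hz) hx
    (hext _ (Set.mem_insert z _)))

theorem chainHull_eq_insert_chainBelow (hacg : IsAlgConvexGeometry φ) :
    chainHull C x = insert x (chainBelow C x) := by
  obtain ⟨hcl, halg, hempty, hae⟩ := hacg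
  have hmono := hcl.monotone
  obtain ⟨hext, -, hidem⟩ := hcl
  refine subset_antisymm (fun z hz => ?_)
    (Set.insert_subset mem_chainHull hC.2.1.chainBelow_subset_chainHull)
  by_contra hz_new
  obtain ⟨hzx, hzb⟩ := not_or.mp hz_new
  have hz_closure : z ∈ φ (chainBelow C x ∪ {x}) := by
    rw [Set.union_singleton]
    exact chainHull_subset (hC.closure_insert_chainBelow_mem hext hmono hidem
      mem_chainHull) (hext _ (Set.mem_insert x _)) hz
  refine hae z x _ hzx (hC.1 (hC.chainBelow_mem hext hmono halg hempty)) hzb hz_closure ?_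
  rw [Set.union_singleton]
  exact hC.mem_closure_insert_chainBelow hext hmono hidem hz hzb

theorem chainHull_injective (hacg : IsAlgConvexGeometry φ) : (chainHull C).Injective := by
  intro x y hxy
  have hx : x ∈ insert y (chainBelow C y) :=
    hC.chainHull_eq_insert_chainBelow hacg ▸ hxy ▸ mem_chainHull
  refine hx.resolve_right fun hxb => notMem_chainBelow (C := C) (x := y) ?_
  obtain ⟨hcl, halg, hempty, -⟩ := hacg
  exact chainHull_subset (hC.chainBelow_mem hcl.1 hcl.monotone halg hempty) hxb
    (hxy ▸ mem_chainHull)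

theorem setOf_downClosed_eq (hext : ∀ A, A ⊆ φ A) (hmono : Monotone φ) (halg : IsAlgebraicOp φ)
    (hempty : φ ∅ = ∅) :
    {A : Set X | ∀ x y, chainHull C x ⊆ chainHull C y → y ∈ A → x ∈ A} = C := by
  ext A
  refine ⟨fun hA => ?_, fun hA x y hxy hy => chainHull_subset hA hy (hxy mem_chainHull)⟩
  have hA_eq : ⋃₀ (chainHull C '' A) = A := by
    refine subset_antisymm ?_ fun z hz => ⟨_, ⟨z, hz, rfl⟩, mem_chainHull⟩
    rintro z ⟨_, ⟨y, hy, rfl⟩, hzy⟩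
    exact hA z y (chainHull_subset (hC.chainHull_mem hext hmono) hzy) hy
  rw [← hA_eq]
  exact hC.sUnion_mem hext hmono halg hempty (Set.image_subset_iff.mpr
    fun _ _ => hC.chainHull_mem hext hmono)

end IsMaxChainOfClosed

end

/-- For a maximal chain C of an algebraic convex geometry, the relation
x ≤_C y iff h_C(x) ⊆ h_C(y) is a total order on X whose down-sets are exactly the
members of C. -/
theorem stmt14 {X : Type*} (φ : Set X → Set X)
    (hacg : IsAlgConvexGeometry φ) (C : Set (Set X))
    (hC : IsMaxChainOfClosed φ C) :
    let r : X → X → Prop :=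
      fun x y => (⋂₀ {C' | C' ∈ C ∧ x ∈ C'}) ⊆ ⋂₀ {C' | C' ∈ C ∧ y ∈ C'}
    (∀ x, r x x) ∧ (∀ x y, r x y → r y x → x = y) ∧
      (∀ x y z, r x y → r y z → r x z) ∧ (∀ x y, r x y ∨ r y x) ∧
      {A : Set X | ∀ x y, r x y → y ∈ A → x ∈ A} = C := by
  intro r
  have hhull_mem (x : X) : chainHull C x ∈ C := hC.chainHull_mem hacg.1.1 hacg.1.monotone
  exact ⟨fun _ => subset_rfl,
    fun _ _ hxy hyx => hC.chainHull_injective hacg (hxy.antisymm hyx),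
    fun _ _ _ hxy hyz => hxy.trans hyz,
    fun x y => hC.2.1.total (hhull_mem x) (hhull_mem y),
    hC.setOf_downClosed_eq hacg.1.1 hacg.1.monotone hacg.2.1 hacg.2.2.1⟩
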